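/- Let 1 < p < 2, q ≥ 1, and a, b, c, d ∈ ℝ with a - b = c - d. Then, with signed powers a^r := |a|^{r-1}a, |a^{(q+1)/2} - b^{(q+1)/2}|² ≤ ((q+1)²/(4q(p-1))) · (c^{p-1} - d^{p-1}) · (a^q - b^q) · (c² + d²)^{(2-p)/2}. -/

import Mathlib

open Real Filter Topology

/-- Signed power: `a^r := |a|^(r-1) * a`. -/
noncomputable def spow (a r : ℝ) : ℝ := |a| ^ (r - 1) * a

lemma spow_zero (r : ℝ) : spow 0 r = 0 := by simp [spow]

lemma spow_neg' (a r : ℝ) : spow (-a) r = -spow a r := by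
  simp [spow, abs_neg, mul_neg]

lemma spow_pos_eq {x : ℝ} (hx : 0 < x) (r : ℝ) : spow x r = x ^ r := by
  rw [spow, abs_of_pos hx, ← Real.rpow_add_one hx.ne' (r - 1)]
  norm_num

lemma spow_of_nonneg {x : ℝ} (hx : 0 ≤ x) {r : ℝ} (hr : 0 < r) : spow x r = x ^ r := by
  rcases hx.eq_or_lt with h | h
  · rw [← h, spow_zero, Real.zero_rpow hr.ne']
  · exact spow_pos_eq h r

lemma spow_hasDerivAt_ne {t : ℝ} (r : ℝ) (ht : t ≠ 0) :
    HasDerivAt (fun x => spow x r) (r * |t| ^ (r - 1)) t := by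
  rcases ht.lt_or_gt with h | h
  · have h1 : HasDerivAt (fun y : ℝ => y ^ r) (r * (-t) ^ (r - 1)) (-t) :=
      Real.hasDerivAt_rpow_const (Or.inl (by linarith))
    have h2 : HasDerivAt (fun x : ℝ => (-x) ^ r) (r * (-t) ^ (r - 1) * (-1)) t :=
      h1.comp t (hasDerivAt_neg t)
    have h3 : HasDerivAt (fun x : ℝ => -((-x) ^ r)) (r * (-t) ^ (r - 1)) t := by
      have h4 := h2.neg; simp only [mul_neg, mul_one, neg_neg] at h4; exact h4
    rw [abs_of_neg h]
    apply h3.congr_of_eventuallyEq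
    filter_upwards [Iio_mem_nhds h] with x hx
    have hx0 : (-x : ℝ) ≠ 0 := by simp at hx ⊢; linarith
    have : (-x : ℝ) ^ r = (-x) ^ (r - 1) * (-x) := by
      rw [← Real.rpow_add_one hx0 (r - 1)]; norm_num
    rw [spow, abs_of_neg hx, this]; ring
  · have h1 : HasDerivAt (fun y : ℝ => y ^ r) (r * t ^ (r - 1)) t :=
      Real.hasDerivAt_rpow_const (Or.inl h.ne')
    rw [abs_of_pos h]
    apply h1.congr_of_eventuallyEq
    filter_upwards [Ioi_mem_nhds h] with x hx
    exact spow_pos_eq hx r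

lemma spow_hasDerivAt {r : ℝ} (hr : 1 ≤ r) (t : ℝ) :
    HasDerivAt (fun x => spow x r) (r * |t| ^ (r - 1)) t := by
  rcases eq_or_ne t 0 with rfl | ht
  · rcases hr.eq_or_lt with h | h
    · subst h
      simp only [spow, sub_self, Real.rpow_zero, one_mul, abs_zero, mul_one]
      exact hasDerivAt_id 0
    · have hval : r * |(0:ℝ)| ^ (r - 1) = 0 := by
        rw [abs_zero, Real.zero_rpow (by linarith : r - 1 ≠ 0), mul_zero]
      rw [hval, hasDerivAt_iff_tendsto_slope]
      have hc : Tendsto (fun x : ℝ => |x| ^ (r - 1)) (𝓝 0) (𝓝 0) := by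
        have h1 : ContinuousAt (fun y : ℝ => y ^ (r - 1)) |0| := by
          simpa using Real.continuousAt_rpow_const 0 (r - 1) (Or.inr (by linarith))
        have h2 := h1.comp continuous_abs.continuousAt (x := (0:ℝ))
        have h3 : (0:ℝ) ^ (r - 1) = 0 := Real.zero_rpow (by linarith : r - 1 ≠ 0)
        simpa [Function.comp_def, h3] using h2.tendsto
      apply (hc.mono_left nhdsWithin_le_nhds).congr'
      filter_upwards [self_mem_nhdsWithin] with x hx
      have hx0 : (x : ℝ) ≠ 0 := hx
      rw [slope_def_field, spow_zero, spow]
      field_simp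
      ring
  · exact spow_hasDerivAt_ne r ht

lemma spow_integral {r : ℝ} (hr : 1 ≤ r) (x y : ℝ) :
    ∫ t in x..y, r * |t| ^ (r - 1) = spow y r - spow x r :=
  intervalIntegral.integral_eq_sub_of_hasDerivAt (fun t _ => spow_hasDerivAt hr t)
    ((continuous_const.mul (continuous_abs.rpow_const
      (fun t => Or.inr (by linarith)))).intervalIntegrable _ _)

lemma spow_mono {r : ℝ} (hr : 1 ≤ r) {x y : ℝ} (hxy : x ≤ y) : spow x r ≤ spow y r := by
  have h := spow_integral hr x y
  have h2 : 0 ≤ ∫ t in x..y, r * |t| ^ (r - 1) :=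
    intervalIntegral.integral_nonneg hxy (fun u _ =>
      mul_nonneg (by linarith) (Real.rpow_nonneg (abs_nonneg u) _))
  linarith

lemma lemA {s : ℝ} (hs : 1 ≤ s) {a b : ℝ} (hab : b ≤ a) :
    (spow a s - spow b s) ^ 2 ≤
      s ^ 2 / (2 * s - 1) * (spow a (2 * s - 1) - spow b (2 * s - 1)) * (a - b) := by
  set f : ℝ → ℝ := fun t => |t| ^ (s - 1) with hf
  have hfc : Continuous f := continuous_abs.rpow_const (fun t => Or.inr (by linarith))
  have hf2 : ∀ t : ℝ, f t ^ 2 = |t| ^ (2 * s - 1 - 1) := by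
    intro t
    rw [hf]
    simp only
    rw [← Real.rpow_natCast (|t| ^ (s - 1)) 2, ← Real.rpow_mul (abs_nonneg t)]
    norm_num
    ring_nf
  set I1 := ∫ t in b..a, f t with hI1
  set I2 := ∫ t in b..a, f t ^ 2 with hI2
  have int1 : IntervalIntegrable f MeasureTheory.volume b a := hfc.intervalIntegrable _ _
  have int2 : IntervalIntegrable (fun t => f t ^ 2) MeasureTheory.volume b a :=
    (hfc.pow 2).intervalIntegrable _ _
  have h1 : spow a s - spow b s = s * I1 := by
    rw [← spow_integral hs b a, hI1, ← intervalIntegral.integral_const_mul]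
  have h2 : spow a (2 * s - 1) - spow b (2 * s - 1) = (2 * s - 1) * I2 := by
    rw [← spow_integral (by linarith : (1:ℝ) ≤ 2 * s - 1) b a, hI2,
      ← intervalIntegral.integral_const_mul]
    apply intervalIntegral.integral_congr
    intro t _
    show (2 * s - 1) * |t| ^ (2 * s - 1 - 1) = (2 * s - 1) * f t ^ 2
    rw [hf2 t]
  have hCS : I1 ^ 2 ≤ (a - b) * I2 := by
    rcases hab.eq_or_lt with h | h
    · subst h; simp [hI1, hI2]
    · set L := a - b with hL
      have hL0 : 0 < L := by simp [hL]; linarith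
      set m := I1 / L with hm
      have key : 0 ≤ ∫ t in b..a, (f t - m) ^ 2 :=
        intervalIntegral.integral_nonneg hab (fun u _ => sq_nonneg _)
      have expand : (∫ t in b..a, (f t - m) ^ 2) = I2 - 2 * m * I1 + m ^ 2 * L := by
        have e : ∀ t : ℝ, (f t - m) ^ 2 = f t ^ 2 - 2 * m * f t + m ^ 2 := by
          intro t; ring
        rw [intervalIntegral.integral_congr (g := fun t => f t ^ 2 - 2 * m * f t + m ^ 2)
          (fun t _ => e t)]
        rw [intervalIntegral.integral_add (int2.sub ((int1.const_mul (2 * m))))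
          intervalIntegrable_const,
          intervalIntegral.integral_sub int2 (int1.const_mul (2 * m)),
          intervalIntegral.integral_const_mul, intervalIntegral.integral_const]
        simp [hI1, hI2, hL]
        ring
      rw [expand, hm] at key
      have hLne : L ≠ 0 := hL0.ne'
      have key2 : 0 ≤ (I2 - 2 * (I1 / L) * I1 + (I1 / L) ^ 2 * L) * L :=
        mul_nonneg key hL0.le
      have e2 : (I2 - 2 * (I1 / L) * I1 + (I1 / L) ^ 2 * L) * L = I2 * L - I1 ^ 2 := by
        field_simp
        ring
      rw [e2] at key2
      nlinarith [key2]
  rw [h1, h2]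
  have h2s : (0:ℝ) < 2 * s - 1 := by linarith
  have heq : s ^ 2 / (2 * s - 1) * ((2 * s - 1) * I2) * (a - b) = s ^ 2 * ((a - b) * I2) := by
    have hc2 : s ^ 2 / (2 * s - 1) * ((2 * s - 1) * I2) = s ^ 2 * I2 := by
      rw [← mul_assoc, div_mul_cancel₀ _ h2s.ne']
    rw [hc2]; ring
  rw [heq]
  calc (s * I1) ^ 2 = s ^ 2 * I1 ^ 2 := by ring
    _ ≤ s ^ 2 * ((a - b) * I2) := by
        apply mul_le_mul_of_nonneg_left hCS (sq_nonneg s)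

lemma lemB_piece {p : ℝ} (hp1 : 1 < p) (hp2 : p < 2) {K x y : ℝ}
    (hx : 0 ≤ x) (hxy : x ≤ y)
    (hK : ∀ t, x < t → t < y → K ≤ (p - 1) * t ^ (p - 2)) :
    K * (y - x) ≤ spow y (p - 1) - spow x (p - 1) := by
  have hp1' : (0:ℝ) < p - 1 := by linarith
  have hmono : MonotoneOn (fun t : ℝ => t ^ (p - 1) - K * t) (Set.Icc x y) := by
    apply monotoneOn_of_deriv_nonneg (convex_Icc x y)
    · apply ContinuousOn.sub
      · exact fun t _ =>
          (Real.continuousAt_rpow_const t (p - 1) (Or.inr (by linarith))).continuousWithinAt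
      · exact (continuous_const.mul continuous_id).continuousOn
    · intro t ht
      rw [interior_Icc] at ht
      have ht0 : t ≠ 0 := (lt_of_le_of_lt hx ht.1).ne'
      exact ((Real.hasDerivAt_rpow_const (p := p - 1) (Or.inl ht0)).sub
        ((hasDerivAt_id t).const_mul K)).differentiableAt.differentiableWithinAt
    · intro t ht
      rw [interior_Icc] at ht
      have ht0 : t ≠ 0 := (lt_of_le_of_lt hx ht.1).ne'
      have hd : HasDerivAt (fun t : ℝ => t ^ (p - 1) - K * t)
          ((p - 1) * t ^ (p - 1 - 1) - K * 1) t :=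
        (Real.hasDerivAt_rpow_const (p := p - 1) (Or.inl ht0)).sub
          ((hasDerivAt_id t).const_mul K)
      rw [hd.deriv]
      have h1 := hK t ht.1 ht.2
      have e : p - 1 - 1 = p - 2 := by ring
      rw [e]
      linarith
  have h := hmono (Set.left_mem_Icc.2 hxy) (Set.right_mem_Icc.2 hxy) hxy
  simp only at h
  rw [spow_of_nonneg hx hp1', spow_of_nonneg (hx.trans hxy) hp1']
  linarith

lemma lemB {p : ℝ} (hp1 : 1 < p) (hp2 : p < 2) {K c d : ℝ} (hdc : d ≤ c)
    (hK : ∀ t : ℝ, d < t → t < c → t ≠ 0 → K ≤ (p - 1) * |t| ^ (p - 2)) :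
    K * (c - d) ≤ spow c (p - 1) - spow d (p - 1) := by
  rcases le_or_gt 0 d with h0d | h0d
  · have := lemB_piece hp1 hp2 h0d hdc (fun t h1 h2 => by
      have ht : 0 < t := lt_of_le_of_lt h0d h1
      have := hK t h1 h2 ht.ne'
      rwa [abs_of_pos ht] at this)
    linarith
  · rcases le_or_gt c 0 with hc0 | hc0
    · have := lemB_piece hp1 hp2 (neg_nonneg.2 hc0) (by linarith : -c ≤ -d) (fun t h1 h2 => by
        have ht : 0 < t := lt_of_le_of_lt (neg_nonneg.2 hc0) h1
        have := hK (-t) (by linarith) (by linarith) (by simpa using ht.ne')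
        rwa [abs_neg, abs_of_pos ht] at this)
      rw [spow_neg', spow_neg'] at this
      linarith
    · have hA := lemB_piece hp1 hp2 (le_refl (0:ℝ)) hc0.le (fun t h1 h2 => by
        have := hK t (by linarith) h2 h1.ne'
        rwa [abs_of_pos h1] at this)
      have hB := lemB_piece hp1 hp2 (le_refl (0:ℝ)) (by linarith : (0:ℝ) ≤ -d) (fun t h1 h2 => by
        have := hK (-t) (by linarith) (by linarith) (by simpa using h1.ne')
        rwa [abs_neg, abs_of_pos h1] at this)
      rw [spow_neg'] at hB
      rw [spow_zero] at hA hB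
      linarith

lemma main_ineq (p q a b c d : ℝ) (hp1 : 1 < p) (hp2 : p < 2) (hq : 1 ≤ q)
    (habcd : a - b = c - d) (hab : b ≤ a) :
    |spow a ((q + 1) / 2) - spow b ((q + 1) / 2)| ^ 2 ≤
      ((q + 1) ^ 2 / (4 * q * (p - 1))) * (spow c (p - 1) - spow d (p - 1)) *
        (spow a q - spow b q) * (c ^ 2 + d ^ 2) ^ ((2 - p) / 2) := by
  have hdc : d ≤ c := by linarith
  have hq0 : (0:ℝ) < q := by linarith
  have hp1' : (0:ℝ) < p - 1 := by linarith
  rcases (by positivity : (0:ℝ) ≤ c ^ 2 + d ^ 2).eq_or_lt with hS | hS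
  · have hc : c = 0 := by nlinarith [sq_nonneg c, sq_nonneg d]
    have hd : d = 0 := by nlinarith [sq_nonneg c, sq_nonneg d]
    have hab' : a = b := by rw [hc, hd] at habcd; linarith
    rw [hab', hc, hd]
    simp
  · set S := c ^ 2 + d ^ 2 with hSdef
    set s := (q + 1) / 2 with hsdef
    have hs1 : 1 ≤ s := by rw [hsdef]; linarith
    have h2s : 2 * s - 1 = q := by rw [hsdef]; ring
    have hA := lemA hs1 hab
    rw [h2s] at hA
    set K := (p - 1) * S ^ ((p - 2) / 2) with hKdef
    have hB : K * (c - d) ≤ spow c (p - 1) - spow d (p - 1) := by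
      apply lemB hp1 hp2 hdc
      intro t h1 h2 ht
      have habs : |t| ≤ Real.sqrt S := by
        rw [← Real.sqrt_sq_eq_abs]
        apply Real.sqrt_le_sqrt
        rcases le_or_gt 0 t with h | h
        · nlinarith
        · nlinarith
      have h3 : (Real.sqrt S) ^ (p - 2) ≤ |t| ^ (p - 2) :=
        Real.rpow_le_rpow_of_nonpos (abs_pos.2 ht) habs (by linarith)
      have h4 : (Real.sqrt S) ^ (p - 2) = S ^ ((p - 2) / 2) := by
        rw [Real.sqrt_eq_rpow, ← Real.rpow_mul (by positivity : (0:ℝ) ≤ S)]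
        norm_num
        ring_nf
      rw [hKdef, ← h4]
      exact mul_le_mul_of_nonneg_left h3 (by linarith)
    have hEF : S ^ ((2 - p) / 2) * S ^ ((p - 2) / 2) = 1 := by
      rw [← Real.rpow_add hS]
      have e : (2 - p) / 2 + (p - 2) / 2 = 0 := by ring
      rw [e, Real.rpow_zero]
    have hE0 : 0 ≤ S ^ ((2 - p) / 2) := Real.rpow_nonneg (by positivity) _
    set E := S ^ ((2 - p) / 2) with hEdef
    set Δp := spow c (p - 1) - spow d (p - 1) with hΔp
    set Δq := spow a q - spow b q with hΔq
    have h5 : E * (K * (c - d)) ≤ E * Δp := mul_le_mul_of_nonneg_left hB hE0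
    have h6 : E * (K * (c - d)) = (p - 1) * (c - d) := by
      rw [hKdef]
      calc E * ((p - 1) * S ^ ((p - 2) / 2) * (c - d))
          = (E * S ^ ((p - 2) / 2)) * ((p - 1) * (c - d)) := by ring
        _ = (p - 1) * (c - d) := by rw [hEdef, hEF]; ring
    have hcd : c - d ≤ E * Δp / (p - 1) := by
      rw [le_div_iff₀ hp1']
      nlinarith [h5, h6]
    have hΔq0 : 0 ≤ Δq := sub_nonneg.2 (spow_mono hq hab)
    have hX : |spow a s - spow b s| ^ 2 = (spow a s - spow b s) ^ 2 := sq_abs _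
    rw [hX]
    calc (spow a s - spow b s) ^ 2
        ≤ s ^ 2 / q * Δq * (a - b) := hA
      _ = s ^ 2 / q * Δq * (c - d) := by rw [habcd]
      _ ≤ s ^ 2 / q * Δq * (E * Δp / (p - 1)) := by
          apply mul_le_mul_of_nonneg_left hcd
          positivity
      _ = (q + 1) ^ 2 / (4 * q * (p - 1)) * Δp * Δq * E := by
          rw [hsdef]
          field_simp
          ring

theorem stmt3 (p q a b c d : ℝ) (hp1 : 1 < p) (hp2 : p < 2) (hq : 1 ≤ q)
    (habcd : a - b = c - d) :
    |spow a ((q + 1) / 2) - spow b ((q + 1) / 2)| ^ 2 ≤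
      ((q + 1) ^ 2 / (4 * q * (p - 1))) * (spow c (p - 1) - spow d (p - 1)) *
        (spow a q - spow b q) * (c ^ 2 + d ^ 2) ^ ((2 - p) / 2) := by
  rcases le_total b a with hab | hab
  · exact main_ineq p q a b c d hp1 hp2 hq habcd hab
  · have h := main_ineq p q b a d c hp1 hp2 hq (by linarith) hab
    rw [abs_sub_comm] at h
    calc |spow a ((q + 1) / 2) - spow b ((q + 1) / 2)| ^ 2
        ≤ ((q + 1) ^ 2 / (4 * q * (p - 1))) * (spow d (p - 1) - spow c (p - 1)) *
          (spow b q - spow a q) * (d ^ 2 + c ^ 2) ^ ((2 - p) / 2) := h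
      _ = ((q + 1) ^ 2 / (4 * q * (p - 1))) * (spow c (p - 1) - spow d (p - 1)) *
          (spow a q - spow b q) * (c ^ 2 + d ^ 2) ^ ((2 - p) / 2) := by
          rw [add_comm (d ^ 2) (c ^ 2)]
          ring
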